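/- For any matrix X of size m×n with singular value decomposition X = U Σ Vᵀ, and any matrices A of size m×m and B of size m×n with A Aᵀ = I and B Bᵀ = I, the trace of A X Bᵀ is at most the nuclear norm of X (the sum of the singular values of X). -/

import Mathlib

/-!
Put `P = A U` and `Q = B V`, so that
`trace (A X Bᵀ) = trace (P Σ Qᵀ) = ∑ᵢⱼ Σᵢⱼ (Pᵀ Q)ᵢⱼ`.
Both `P` and `Q` have orthonormal rows, so `Qᵀ Q` is an orthogonal projection and every
column of `Q` (and of `P`) has norm at most one; by Cauchy–Schwarz every entry of `Pᵀ Q` is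
at most one. As the entries of `Σ` are nonnegative, the trace is at most their sum `∑ σᵢ`.
-/

open Matrix

namespace Matrix

section RectDiagonal

variable {m n : ℕ} {R : Type*}

def rectDiagonal [Zero R] (σ : ℕ → R) : Matrix (Fin m) (Fin n) R :=
  of fun i j => if (i : ℕ) = j then σ i else 0

theorem sum_rectDiagonal [AddCommMonoid R] (σ : ℕ → R) :
    ∑ i : Fin m, ∑ j : Fin n, rectDiagonal σ i j = ∑ i ∈ Finset.range (min m n), σ i := by
  have row_sum (i : Fin m) :
      ∑ j : Fin n, rectDiagonal σ i j = if (i : ℕ) < n then σ i else 0 := by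
    simp [rectDiagonal, Fin.sum_univ_eq_sum_range (fun j => if (i : ℕ) = j then σ i else 0)]
  simp_rw [row_sum]
  rw [Fin.sum_univ_eq_sum_range (fun i => if i < n then σ i else 0), ← Finset.sum_filter]
  congr 1
  ext i
  simp

theorem rectDiagonal_nonneg [Zero R] [Preorder R] {σ : ℕ → R} (hσ : ∀ i, 0 ≤ σ i)
    (i : Fin m) (j : Fin n) : 0 ≤ rectDiagonal σ i j := by
  rw [rectDiagonal, of_apply]
  split_ifs
  exacts [hσ i, le_rfl]

end RectDiagonal

variable {l m n R : Type*} [Fintype m]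

section CommSemiring

variable [CommSemiring R]

theorem trace_mul_mul_transpose [Fintype l] [Fintype n] (P : Matrix l m R) (S : Matrix m n R)
    (Q : Matrix l n R) : trace (P * S * Qᵀ) = ∑ i, ∑ j, S i j * (Pᵀ * Q) i j := by
  rw [Matrix.mul_assoc, trace_mul_comm, Matrix.mul_assoc, ← transpose_transpose (Qᵀ * P),
    ← sum_hadamard_eq, transpose_mul, transpose_transpose]
  rfl

theorem mul_mul_transpose_eq_one [Fintype n] [DecidableEq l] [DecidableEq m] {A : Matrix l m R}
    {U : Matrix m n R} (hA : A * Aᵀ = 1) (hU : U * Uᵀ = 1) : A * U * (A * U)ᵀ = 1 := by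
  rw [transpose_mul, Matrix.mul_assoc, ← Matrix.mul_assoc U, hU, Matrix.one_mul, hA]

end CommSemiring

variable [CommRing R] [LinearOrder R] [IsStrictOrderedRing R]

theorem sum_sq_le_one_of_mul_transpose_eq_one [Fintype n] [DecidableEq m] {Q : Matrix m n R}
    (hQ : Q * Qᵀ = 1) (k : n) : ∑ i, Q i k ^ 2 ≤ 1 := by
  set E := Qᵀ * Q
  have hE : E * E = E := by
    rw [Matrix.mul_assoc, ← Matrix.mul_assoc Q, hQ, Matrix.one_mul]
  have hE_symm : Eᵀ = E := by
    rw [transpose_mul, transpose_transpose]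
  have hEk : E k k = ∑ i, Q i k ^ 2 := by
    simp only [E, mul_apply, transpose_apply, sq]
  have hEk_sq : E k k ^ 2 ≤ E k k := calc
    E k k ^ 2 ≤ ∑ j, E k j ^ 2 :=
      Finset.single_le_sum (f := fun j => E k j ^ 2) (fun j _ => sq_nonneg _) (Finset.mem_univ k)
    _ = E k k := by
      conv_rhs => rw [← hE, mul_apply]
      refine Finset.sum_congr rfl fun j _ => ?_
      rw [sq, ← transpose_apply E j k, hE_symm]
  rw [← hEk]
  nlinarith

theorem transpose_mul_apply_le_one [Fintype l] [Fintype n] [DecidableEq l] {P : Matrix l m R}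
    {Q : Matrix l n R} (hP : P * Pᵀ = 1) (hQ : Q * Qᵀ = 1) (i : m) (j : n) :
    (Pᵀ * Q) i j ≤ 1 := by
  have hPi := sum_sq_le_one_of_mul_transpose_eq_one hP i
  have hQj := sum_sq_le_one_of_mul_transpose_eq_one hQ j
  have cauchy_schwarz :=
    Finset.sum_mul_sq_le_sq_mul_sq Finset.univ (fun k => P k i) (fun k => Q k j)
  have hsq : (Pᵀ * Q) i j ^ 2 ≤ 1 ^ 2 := calc
    (Pᵀ * Q) i j ^ 2 ≤ (∑ k, P k i ^ 2) * ∑ k, Q k j ^ 2 := by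
      simpa only [mul_apply, transpose_apply] using cauchy_schwarz
    _ ≤ 1 ^ 2 := by
      rw [one_pow]
      exact mul_le_one₀ hPi (Finset.sum_nonneg fun k _ => sq_nonneg _) hQj
  exact le_of_sq_le_sq hsq zero_le_one

end Matrix

theorem von_neumann_trace_inequality_general
    (m n : ℕ) (X : Matrix (Fin m) (Fin n) ℝ)
    (U : Matrix (Fin m) (Fin m) ℝ) (V : Matrix (Fin n) (Fin n) ℝ)
    (σ : ℕ → ℝ)
    (hU : U * Uᵀ = 1)
    (hV : V * Vᵀ = 1)
    (hσ : ∀ i, 0 ≤ σ i)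
    (hX : X = U * (Matrix.of fun (i : Fin m) (j : Fin n) =>
      if (i : ℕ) = (j : ℕ) then σ (i : ℕ) else 0) * Vᵀ)
    (A : Matrix (Fin m) (Fin m) ℝ) (B : Matrix (Fin m) (Fin n) ℝ)
    (hA : A * Aᵀ = 1) (hB : B * Bᵀ = 1) :
    Matrix.trace (A * X * Bᵀ) ≤ ∑ i ∈ Finset.range (min m n), σ i := by
  replace hX : X = U * (rectDiagonal σ : Matrix (Fin m) (Fin n) ℝ) * Vᵀ := hX
  have hP := mul_mul_transpose_eq_one hA hU
  have hQ := mul_mul_transpose_eq_one hB hV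
  calc trace (A * X * Bᵀ) = trace (A * U * rectDiagonal σ * (B * V)ᵀ) := by
        simp only [hX, transpose_mul, Matrix.mul_assoc]
    _ = ∑ i, ∑ j, rectDiagonal σ i j * ((A * U)ᵀ * (B * V)) i j :=
        trace_mul_mul_transpose _ _ _
    _ ≤ ∑ i, ∑ j, rectDiagonal σ i j :=
        Finset.sum_le_sum fun i _ => Finset.sum_le_sum fun j _ =>
          mul_le_of_le_one_right (rectDiagonal_nonneg hσ i j)
            (transpose_mul_apply_le_one hP hQ i j)
    _ = ∑ i ∈ Finset.range (min m n), σ i := sum_rectDiagonal σ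

/-- Von Neumann trace inequality: for `X = U Σ Vᵀ` an SVD of `X` and any `A`, `B`
with orthonormal rows (`A Aᵀ = I`, `B Bᵀ = I`), `trace (A X Bᵀ) ≤ ‖X‖₊` (nuclear norm,
the sum of the singular values of `X`). -/
theorem von_neumann_trace_inequality
    (m n : ℕ) (X : Matrix (Fin m) (Fin n) ℝ)
    (U : Matrix (Fin m) (Fin m) ℝ) (V : Matrix (Fin n) (Fin n) ℝ)
    (σ : ℕ → ℝ)
    (hU : U * Uᵀ = 1) (hU' : Uᵀ * U = 1)
    (hV : V * Vᵀ = 1) (hV' : Vᵀ * V = 1)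
    (hσ : ∀ i, 0 ≤ σ i)
    (hX : X = U * (Matrix.of fun (i : Fin m) (j : Fin n) =>
      if (i : ℕ) = (j : ℕ) then σ (i : ℕ) else 0) * Vᵀ)
    (A : Matrix (Fin m) (Fin m) ℝ) (B : Matrix (Fin m) (Fin n) ℝ)
    (hA : A * Aᵀ = 1) (hB : B * Bᵀ = 1) :
    Matrix.trace (A * X * Bᵀ) ≤ ∑ i ∈ Finset.range (min m n), σ i :=
  von_neumann_trace_inequality_general m n X U V σ hU hV hσ hX A B hA hB
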